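/- arXiv:1810.12221 — 3 statements merged into one kernel-verified Lean document; each statement's English description precedes it below -/
import Mathlib

section
/- Let ε, μ, c > 0 be constants with c² = 1/(εμ). Suppose E, B : ℝ³ × ℝ → ℝ³ are C² vector fields, J : ℝ³ × ℝ → ℝ³ is a C¹ vector field and ρ : ℝ³ × ℝ → ℝ is a C¹ scalar field such that Ampère's law ∇×B − (1/c²)∂ₜE = μJ and the continuity equation ∂ₜρ + ∇·J = 0 hold at all (x,t), and such that at some time t₀ one has ∇·E(x,t₀) = (1/ε)ρ(x,t₀) for all x. Then Gauss's law ∇·E(x,t) = (1/ε)ρ(x,t) holds for all x ∈ ℝ³ and all t ∈ ℝ. -/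
/-!
The Gauss defect `∇·E − ρ/ε` has zero time derivative at every point. Indeed, `∂ₜ` commutes
with `∇·` because `E` is `C²` (symmetry of second derivatives), and Ampère's law then gives
`∂ₜ∇·E = c²(∇·(∇×B) − μ ∇·J)`. The divergence of a curl vanishes, again by symmetry of second
derivatives, and the continuity equation turns `−c²μ ∇·J` into `c²μ ∂ₜρ = ∂ₜρ/ε`. So the defect
is constant in time, and it vanishes at `t₀`.
-/

/-- Spatial partial derivative in the `i`-th coordinate direction. -/
noncomputable def pd (i : Fin 3) (f : (Fin 3 → ℝ) → ℝ) (x : Fin 3 → ℝ) : ℝ :=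
  fderiv ℝ f x (Pi.single i 1)

/-- Spatial divergence of a vector field on ℝ³: `∇·F = ∑ᵢ ∂ᵢFᵢ`. -/
noncomputable def vdiv (F : (Fin 3 → ℝ) → Fin 3 → ℝ) (x : Fin 3 → ℝ) : ℝ :=
  ∑ i, pd i (fun y => F y i) x

/-- Spatial curl of a vector field on ℝ³: `(∇×F)ₖ = ∑ᵢⱼ εₖᵢⱼ ∂ᵢFⱼ`. -/
noncomputable def vcurl (F : (Fin 3 → ℝ) → Fin 3 → ℝ) (x : Fin 3 → ℝ) : Fin 3 → ℝ :=
  ![pd 1 (fun y => F y 2) x - pd 2 (fun y => F y 1) x,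
    pd 2 (fun y => F y 0) x - pd 0 (fun y => F y 2) x,
    pd 0 (fun y => F y 1) x - pd 1 (fun y => F y 0) x]

section SecondDerivatives

variable {E F : Type*} [NormedAddCommGroup E] [NormedSpace ℝ E]
  [NormedAddCommGroup F] [NormedSpace ℝ F]

theorem ContDiff.differentiable_fderiv_apply {f : E → F} (hf : ContDiff ℝ 2 f) (v : E) :
    Differentiable ℝ (fun y => fderiv ℝ f y v) :=
  ((hf.fderiv_right (m := 1) (by norm_num)).clm_apply contDiff_const).differentiable
    one_ne_zero

theorem fderiv_fderiv_apply_comm {f : E → F} (hf : ContDiff ℝ 2 f) (x v w : E) :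
    fderiv ℝ (fun y => fderiv ℝ f y v) x w = fderiv ℝ (fun y => fderiv ℝ f y w) x v := by
  have hd : DifferentiableAt ℝ (fderiv ℝ f) x :=
    (hf.fderiv_right (m := 1) (by norm_num)).differentiable one_ne_zero x
  have h₂ (u : E) : fderiv ℝ (fun y => fderiv ℝ f y u) x = (fderiv ℝ (fderiv ℝ f) x).flip u := by
    simp [fderiv_clm_apply hd (differentiableAt_const u)]
  simp only [h₂, ContinuousLinearMap.flip_apply]
  exact (hf.contDiffAt.isSymmSndFDerivAt (by simp)).eq w v

theorem fderiv_comp_prodMk_left_apply {Φ : E × ℝ → F} {x : E} {t : ℝ}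
    (hΦ : DifferentiableAt ℝ Φ (x, t)) (v : E) :
    fderiv ℝ (fun y => Φ (y, t)) x v = fderiv ℝ Φ (x, t) (v, 0) := by
  have h : HasFDerivAt (fun y => Φ (y, t)) ((fderiv ℝ Φ (x, t)).comp (.inl ℝ E ℝ)) x :=
    hΦ.hasFDerivAt.comp x (hasFDerivAt_prodMk_left x t)
  rw [h.fderiv]
  rfl

theorem hasDerivAt_comp_prodMk_right {Φ : E × ℝ → F} {x : E} {t : ℝ}
    (hΦ : DifferentiableAt ℝ Φ (x, t)) :
    HasDerivAt (fun s => Φ (x, s)) (fderiv ℝ Φ (x, t) (0, 1)) t :=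
  (hΦ.hasFDerivAt.comp t (hasFDerivAt_prodMk_right x t)).hasDerivAt

theorem hasDerivAt_fderiv_slice {φ : E → ℝ → F}
    (hφ : ContDiff ℝ 2 (fun p : E × ℝ => φ p.1 p.2)) (x v : E) (t : ℝ) :
    HasDerivAt (fun s => fderiv ℝ (fun y => φ y s) x v)
      (fderiv ℝ (fun y => deriv (fun s => φ y s) t) x v) t := by
  set Φ := fun p : E × ℝ => φ p.1 p.2
  have hΦ : Differentiable ℝ Φ := hφ.differentiable (by norm_num)
  have h_time : (fun y => deriv (fun s => φ y s) t) = fun y => fderiv ℝ Φ (y, t) (0, 1) :=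
    funext fun y => (hasDerivAt_comp_prodMk_right (hΦ (y, t))).deriv
  have h_space : (fun s => fderiv ℝ (fun y => φ y s) x v) = fun s => fderiv ℝ Φ (x, s) (v, 0) :=
    funext fun s => fderiv_comp_prodMk_left_apply (hΦ (x, s)) v
  rw [h_time, h_space, fderiv_comp_prodMk_left_apply ((hφ.differentiable_fderiv_apply _) _),
    fderiv_fderiv_apply_comm hφ]
  exact hasDerivAt_comp_prodMk_right ((hφ.differentiable_fderiv_apply _) _)

end SecondDerivatives

theorem pd_sub {f g : (Fin 3 → ℝ) → ℝ} {x : Fin 3 → ℝ} (hf : DifferentiableAt ℝ f x)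
    (hg : DifferentiableAt ℝ g x) (i : Fin 3) :
    pd i (fun y => f y - g y) x = pd i f x - pd i g x := by
  simp only [pd]
  rw [fderiv_fun_sub hf hg]
  rfl

theorem ContDiff.differentiable_pd {f : (Fin 3 → ℝ) → ℝ} (hf : ContDiff ℝ 2 f) (i : Fin 3) :
    Differentiable ℝ (pd i f) :=
  hf.differentiable_fderiv_apply _

theorem pd_pd_comm {f : (Fin 3 → ℝ) → ℝ} (hf : ContDiff ℝ 2 f) (i j : Fin 3) (x : Fin 3 → ℝ) :
    pd i (pd j f) x = pd j (pd i f) x :=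
  fderiv_fderiv_apply_comm hf x _ _

theorem vdiv_const_smul (a : ℝ) (F : (Fin 3 → ℝ) → Fin 3 → ℝ) (x : Fin 3 → ℝ) :
    vdiv (fun y => a • F y) x = a * vdiv F x := by
  simp only [vdiv, pd, Pi.smul_apply, smul_eq_mul, Finset.mul_sum]
  refine Finset.sum_congr rfl fun i _ => ?_
  rw [show (fun y => a * F y i) = a • fun y => F y i from rfl, fderiv_const_smul_field]
  rfl

theorem vdiv_sub {F G : (Fin 3 → ℝ) → Fin 3 → ℝ} {x : Fin 3 → ℝ} (hF : DifferentiableAt ℝ F x)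
    (hG : DifferentiableAt ℝ G x) :
    vdiv (fun y => F y - G y) x = vdiv F x - vdiv G x := by
  simp only [vdiv, Pi.sub_apply, ← Finset.sum_sub_distrib]
  exact Finset.sum_congr rfl fun i _ =>
    pd_sub (differentiableAt_pi.1 hF i) (differentiableAt_pi.1 hG i) i

theorem ContDiff.differentiable_vcurl {F : (Fin 3 → ℝ) → Fin 3 → ℝ} (hF : ContDiff ℝ 2 F) :
    Differentiable ℝ (vcurl F) := by
  have h (i j : Fin 3) : Differentiable ℝ (pd i fun y => F y j) :=
    (contDiff_pi.1 hF j).differentiable_pd i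
  refine differentiable_pi.2 fun k => ?_
  fin_cases k
  · exact (h 1 2).sub (h 2 1)
  · exact (h 2 0).sub (h 0 2)
  · exact (h 0 1).sub (h 1 0)

theorem vdiv_vcurl {F : (Fin 3 → ℝ) → Fin 3 → ℝ} (hF : ContDiff ℝ 2 F) (x : Fin 3 → ℝ) :
    vdiv (vcurl F) x = 0 := by
  have hF' (j : Fin 3) : ContDiff ℝ 2 fun y => F y j := contDiff_pi.1 hF j
  have h (i j : Fin 3) : DifferentiableAt ℝ (pd i fun y => F y j) x :=
    (hF' j).differentiable_pd i x
  simp only [vdiv, vcurl, Fin.sum_univ_three, Matrix.cons_val_zero, Matrix.cons_val_one,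
    Matrix.cons_val_two, Matrix.head_cons, Matrix.tail_cons]
  rw [pd_sub (h 1 2) (h 2 1), pd_sub (h 2 0) (h 0 2), pd_sub (h 0 1) (h 1 0)]
  linear_combination pd_pd_comm (hF' 2) 0 1 x + pd_pd_comm (hF' 1) 2 0 x
    + pd_pd_comm (hF' 0) 1 2 x

theorem hasDerivAt_vdiv {G : (Fin 3 → ℝ) → ℝ → Fin 3 → ℝ}
    (hG : ContDiff ℝ 2 (fun p : (Fin 3 → ℝ) × ℝ => G p.1 p.2)) (x : Fin 3 → ℝ) (t : ℝ) :
    HasDerivAt (fun s => vdiv (fun y => G y s) x)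
      (vdiv (fun y => deriv (fun s => G y s) t) x) t := by
  have hG' (i : Fin 3) : ContDiff ℝ 2 (fun p : (Fin 3 → ℝ) × ℝ => G p.1 p.2 i) :=
    contDiff_pi.1 hG i
  have h_deriv (y : Fin 3 → ℝ) (i : Fin 3) :
      deriv (fun s => G y s) t i = deriv (fun s => G y s i) t := by
    rw [deriv_pi]
    exact fun j => ((hG' j).differentiable (by norm_num)).comp
      ((differentiable_const y).prodMk differentiable_id) t
  simp only [vdiv, pd, h_deriv]
  exact HasDerivAt.fun_sum fun i _ =>
    hasDerivAt_fderiv_slice (φ := fun y s => G y s i) (hG' i) x _ t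

theorem gauss_law_propagation_general
    (ε μ c : ℝ) (hμ : 0 < μ) (hc : 0 < c) (hcεμ : c ^ 2 = 1 / (ε * μ))
    (E B : (Fin 3 → ℝ) → ℝ → Fin 3 → ℝ) (J : (Fin 3 → ℝ) → ℝ → Fin 3 → ℝ)
    (ρ : (Fin 3 → ℝ) → ℝ → ℝ)
    (hE : ContDiff ℝ 2 (fun p : (Fin 3 → ℝ) × ℝ => E p.1 p.2))
    (hB : ContDiff ℝ 2 (fun p : (Fin 3 → ℝ) × ℝ => B p.1 p.2))
    (hJ : ContDiff ℝ 1 (fun p : (Fin 3 → ℝ) × ℝ => J p.1 p.2))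
    (hρ : ContDiff ℝ 1 (fun p : (Fin 3 → ℝ) × ℝ => ρ p.1 p.2))
    (ampere : ∀ (x : Fin 3 → ℝ) (t : ℝ),
      vcurl (fun y => B y t) x - (1 / c ^ 2) • deriv (fun s => E x s) t = μ • J x t)
    (continuity : ∀ (x : Fin 3 → ℝ) (t : ℝ),
      deriv (fun s => ρ x s) t + vdiv (fun y => J y t) x = 0)
    (t₀ : ℝ)
    (h₀ : ∀ x : Fin 3 → ℝ, vdiv (fun y => E y t₀) x = (1 / ε) * ρ x t₀) :
    ∀ (x : Fin 3 → ℝ) (t : ℝ), vdiv (fun y => E y t) x = (1 / ε) * ρ x t := by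
  intro x t
  have hc₂ : c ^ 2 ≠ 0 := pow_ne_zero 2 hc.ne'
  have hcμ : c ^ 2 * μ = 1 / ε := by
    rw [hcεμ]
    field_simp
  have hE_time (s : ℝ) : (fun y => deriv (fun s' => E y s') s)
      = fun y => c ^ 2 • (vcurl (fun z => B z s) y - μ • J y s) := by
    funext y
    rw [← ampere y s, sub_sub_cancel, smul_smul, mul_one_div_cancel hc₂, one_smul]
  have hρ_time (s : ℝ) : HasDerivAt (fun s' => ρ x s') (deriv (fun s' => ρ x s') s) s :=
    (((hρ.differentiable one_ne_zero).comp
      ((differentiable_const x).prodMk differentiable_id)) s).hasDerivAt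
  have h_defect (s : ℝ) :
      HasDerivAt (fun s' => vdiv (fun y => E y s') x - (1 / ε) * ρ x s') 0 s := by
    refine ((hasDerivAt_vdiv hE x s).sub ((hρ_time s).const_mul (1 / ε))).congr_deriv ?_
    have hB_s : ContDiff ℝ 2 fun y => B y s :=
      hB.comp (contDiff_id.prodMk contDiff_const)
    have hJ_s : DifferentiableAt ℝ (fun y => J y s) x :=
      ((hJ.differentiable one_ne_zero).comp (differentiable_id.prodMk (differentiable_const s))) x
    rw [hE_time s, vdiv_const_smul,
      vdiv_sub (G := fun y => μ • J y s) (hB_s.differentiable_vcurl x) (hJ_s.const_smul μ),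
      vdiv_const_smul, vdiv_vcurl hB_s, ← hcμ]
    linear_combination -(c ^ 2 * μ) * continuity x s
  have h_const := is_const_of_deriv_eq_zero (fun s => (h_defect s).differentiableAt)
    (fun s => (h_defect s).deriv) t t₀
  linarith [h₀ x]

/-- If Ampère's law `∇×B − (1/c²)∂ₜE = μJ` and the continuity equation
`∂ₜρ + ∇·J = 0` hold everywhere, and Gauss's law `∇·E = (1/ε)ρ` holds at some time `t₀`,
then Gauss's law holds at all times. -/
theorem gauss_law_propagation
    (ε μ c : ℝ) (hε : 0 < ε) (hμ : 0 < μ) (hc : 0 < c) (hcεμ : c ^ 2 = 1 / (ε * μ))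
    (E B : (Fin 3 → ℝ) → ℝ → Fin 3 → ℝ) (J : (Fin 3 → ℝ) → ℝ → Fin 3 → ℝ)
    (ρ : (Fin 3 → ℝ) → ℝ → ℝ)
    (hE : ContDiff ℝ 2 (fun p : (Fin 3 → ℝ) × ℝ => E p.1 p.2))
    (hB : ContDiff ℝ 2 (fun p : (Fin 3 → ℝ) × ℝ => B p.1 p.2))
    (hJ : ContDiff ℝ 1 (fun p : (Fin 3 → ℝ) × ℝ => J p.1 p.2))
    (hρ : ContDiff ℝ 1 (fun p : (Fin 3 → ℝ) × ℝ => ρ p.1 p.2))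
    (ampere : ∀ (x : Fin 3 → ℝ) (t : ℝ),
      vcurl (fun y => B y t) x - (1 / c ^ 2) • deriv (fun s => E x s) t = μ • J x t)
    (continuity : ∀ (x : Fin 3 → ℝ) (t : ℝ),
      deriv (fun s => ρ x s) t + vdiv (fun y => J y t) x = 0)
    (t₀ : ℝ)
    (h₀ : ∀ x : Fin 3 → ℝ, vdiv (fun y => E y t₀) x = (1 / ε) * ρ x t₀) :
    ∀ (x : Fin 3 → ℝ) (t : ℝ), vdiv (fun y => E y t) x = (1 / ε) * ρ x t :=
  gauss_law_propagation_general ε μ c hμ hc hcεμ E B J ρ hE hB hJ hρ ampere continuity t₀ h₀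
end

section
/- Let c > 0, ζ > 0, ε > 0 and s < 0. Then the contour integral of e^{−izs}/D(z) along the horizontal line Im z = −ε, i.e. the convergent improper integral ∫_{−∞}^{∞} e^{−i(x−iε)s} / (ζ² − ((x−iε)/c)²) dx, equals (cπi/ζ)(e^{i s c ζ} − e^{−i s c ζ}). -/
/-!
Factoring `D`, the integrand is `-c² e^{-εs} e^{-isx} / ((x - z₁)(x - z₂))` with both poles
`z₁,₂ = iε ± cζ` in the upper half plane. The causal exponential `u ↦ 𝟙[u ≥ 0] e^{2πizu}`
(`Im z > 0`) has Fourier transform `(2πi(x - z))⁻¹`, so `((x - z₁)(x - z₂))⁻¹` is the Fourier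
transform of an integrable combination of two of them. It is itself integrable (a product of two
`L²` functions), so Fourier inversion at the continuity point `-s/2π > 0` evaluates the integral;
this replaces the residue computation.
-/

open MeasureTheory Set Complex Real FourierTransform ProbabilityTheory

noncomputable def halfLineExp (z : ℂ) : ℝ → ℂ := (Ici 0).indicator fun u ↦ cexp (2 * π * I * z * u)

lemma halfLineExp_of_nonneg (z : ℂ) {u : ℝ} (hu : 0 ≤ u) :
    halfLineExp z u = cexp (2 * π * I * z * u) :=
  indicator_of_mem (mem_Ici.2 hu) _

lemma continuousAt_halfLineExp (z : ℂ) {u : ℝ} (hu : 0 < u) : ContinuousAt (halfLineExp z) u :=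
  ContinuousAt.congr (f := fun u : ℝ ↦ cexp (2 * π * I * z * u)) (by fun_prop) <|
    Filter.eventuallyEq_of_mem (Ioi_mem_nhds hu) fun _ hv ↦ (halfLineExp_of_nonneg z hv.out.le).symm

lemma re_two_pi_I_mul_neg {z : ℂ} (hz : 0 < z.im) : (2 * π * I * z).re < 0 := by
  have : (2 * π * I * z).re = -(2 * π * z.im) := by simp
  rw [this, neg_lt_zero]
  positivity

lemma integrable_halfLineExp {z : ℂ} (hz : 0 < z.im) : Integrable (halfLineExp z) := by
  rw [halfLineExp, integrable_indicator_iff measurableSet_Ici,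
    integrableOn_Ici_iff_integrableOn_Ioi]
  exact integrableOn_exp_mul_complex_Ioi (re_two_pi_I_mul_neg hz) 0

lemma fourier_halfLineExp {z : ℂ} (hz : 0 < z.im) (x : ℝ) :
    𝓕 (halfLineExp z) x = (2 * π * I * (x - z))⁻¹ := by
  have hw : (2 * π * I * (z - x)).re < 0 := re_two_pi_I_mul_neg (by simpa using hz)
  have hintegrand (u : ℝ) : cexp (↑(-2 * π * u * x) * I) • halfLineExp z u
      = (Ici 0).indicator (fun u : ℝ ↦ cexp (2 * π * I * (z - x) * u)) u := by
    simp only [halfLineExp, indicator, smul_eq_mul, mul_ite, mul_zero, ← Complex.exp_add]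
    congr 2
    push_cast
    ring
  rw [fourier_real_eq_integral_exp_smul, integral_congr_ae (.of_forall hintegrand),
    integral_indicator measurableSet_Ici, integral_Ici_eq_integral_Ioi,
    integral_exp_mul_complex_Ioi hw, ofReal_zero, mul_zero, Complex.exp_zero, neg_div,
    ← div_neg, ← mul_neg, neg_sub, one_div]

lemma MeasureTheory.Integrable.exp_ofReal_mul_I_mul {f : ℝ → ℂ} (hf : Integrable f) {φ : ℝ → ℝ}
    (hφ : Continuous φ) : Integrable fun u ↦ cexp (φ u * I) * f u :=
  hf.bdd_mul (c := 1) (by fun_prop) (.of_forall fun u ↦ (norm_exp_ofReal_mul_I _).le)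

lemma fourier_const_mul_sub {f g : ℝ → ℂ} (hf : Integrable f) (hg : Integrable g) (κ : ℂ)
    (x : ℝ) : 𝓕 (fun u ↦ κ * (f u - g u)) x = κ * (𝓕 f x - 𝓕 g x) := by
  simp only [fourier_real_eq_integral_exp_smul, smul_eq_mul]
  rw [← integral_sub (hf.exp_ofReal_mul_I_mul (by fun_prop))
    (hg.exp_ofReal_mul_I_mul (by fun_prop)), ← integral_const_mul]
  congr 1 with u
  ring

lemma integrable_norm_inv_ofReal_sub_sq {z : ℂ} (hz : z.im ≠ 0) :
    Integrable fun x : ℝ ↦ ‖((x : ℂ) - z)⁻¹‖ ^ 2 := by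
  refine ((integrable_cauchyPDFReal z.re (γ := ‖z.im‖₊)).const_mul
    (π * |z.im|⁻¹)).congr (.of_forall fun x ↦ ?_)
  have hnorm : ‖((x : ℂ) - z)⁻¹‖ ^ 2 = ((x - z.re) ^ 2 + z.im ^ 2)⁻¹ := by
    rw [norm_inv, inv_pow, ← normSq_eq_norm_sq, normSq_apply]
    simp only [sub_re, ofReal_re, sub_im, ofReal_im, zero_sub, mul_neg, neg_mul, neg_neg]
    ring
  dsimp only
  rw [hnorm, cauchyPDFReal_def, coe_nnnorm, Real.norm_eq_abs, sq_abs]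
  field_simp

lemma integrable_inv_ofReal_sub_mul_inv_ofReal_sub {z₁ z₂ : ℂ} (h₁ : z₁.im ≠ 0)
    (h₂ : z₂.im ≠ 0) : Integrable fun x : ℝ ↦ ((x : ℂ) - z₁)⁻¹ * ((x : ℂ) - z₂)⁻¹ := by
  have hL2 {z : ℂ} (hz : z.im ≠ 0) : MemLp (fun x : ℝ ↦ ((x : ℂ) - z)⁻¹) 2 :=
    (memLp_two_iff_integrable_sq_norm (by fun_prop)).2 (integrable_norm_inv_ofReal_sub_sq hz)
  exact (hL2 h₁).integrable_mul (hL2 h₂)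

lemma fourier_halfLineExp_sub {z₁ z₂ : ℂ} (h₁ : 0 < z₁.im) (h₂ : 0 < z₂.im) (hne : z₁ ≠ z₂) :
    𝓕 (fun u ↦ 2 * π * I / (z₁ - z₂) * (halfLineExp z₁ u - halfLineExp z₂ u))
      = fun x : ℝ ↦ ((x : ℂ) - z₁)⁻¹ * ((x : ℂ) - z₂)⁻¹ := by
  ext x
  have hx {z : ℂ} (hz : 0 < z.im) : (x : ℂ) - z ≠ 0 := fun h ↦
    hz.ne (by simpa using congrArg im (sub_eq_zero.1 h))
  rw [fourier_const_mul_sub (integrable_halfLineExp h₁) (integrable_halfLineExp h₂),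
    fourier_halfLineExp h₁, fourier_halfLineExp h₂]
  field_simp [hx h₁, hx h₂, sub_ne_zero.2 hne]
  ring

theorem integral_exp_mul_inv_ofReal_sub_mul_inv_ofReal_sub {z₁ z₂ : ℂ} (h₁ : 0 < z₁.im)
    (h₂ : 0 < z₂.im) (hne : z₁ ≠ z₂) {t : ℝ} (ht : 0 < t) :
    ∫ x : ℝ, cexp (↑(t * x) * I) * (((x : ℂ) - z₁)⁻¹ * ((x : ℂ) - z₂)⁻¹)
      = 2 * π * I / (z₁ - z₂) * (cexp (I * t * z₁) - cexp (I * t * z₂)) := by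
  have hu : 0 < t / (2 * π) := by positivity
  have hF := fourier_halfLineExp_sub h₁ h₂ hne
  have hG : Integrable fun u ↦ 2 * π * I / (z₁ - z₂) * (halfLineExp z₁ u - halfLineExp z₂ u) :=
    ((integrable_halfLineExp h₁).sub (integrable_halfLineExp h₂)).const_mul _
  have hinv := hG.fourierInv_fourier_eq
    (hF ▸ integrable_inv_ofReal_sub_mul_inv_ofReal_sub h₁.ne' h₂.ne') (continuousAt_const.mul
      ((continuousAt_halfLineExp z₁ hu).sub (continuousAt_halfLineExp z₂ hu)))
  rw [hF, fourierInv_eq', halfLineExp_of_nonneg _ hu.le, halfLineExp_of_nonneg _ hu.le] at hinv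
  simp only [RCLike.inner_apply, conj_trivial, smul_eq_mul] at hinv
  refine (integral_congr_ae (.of_forall fun x ↦ ?_)).trans (hinv.trans ?_)
  · congr 3
    field_simp
  · congr 2 <;> congr 1 <;> push_cast <;> field_simp

lemma exp_neg_mul_mul_exp_I_mul_add (ε s σ : ℂ) :
    cexp (-(ε * s)) * cexp (I * -s * (I * ε + σ)) = cexp (-(I * s * σ)) := by
  rw [← Complex.exp_add]
  congr 1
  linear_combination (-(ε * s)) * I_sq

lemma inv_sq_sub_div_sq {c : ℂ} (hc : c ≠ 0) (ζ w a : ℂ) :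
    (ζ ^ 2 - ((w - a) / c) ^ 2)⁻¹ = -c ^ 2 * ((w - (a + c * ζ))⁻¹ * (w - (a - c * ζ))⁻¹) := by
  have hfactor :
      ζ ^ 2 - ((w - a) / c) ^ 2 = (-c ^ 2)⁻¹ * ((w - (a + c * ζ)) * (w - (a - c * ζ))) := by
    field_simp
    ring
  rw [hfactor, mul_inv, inv_inv, mul_inv]

lemma exp_div_sq_sub_div_sq_eq {c : ℝ} (hc : c ≠ 0) (ζ ε s x : ℝ) :
    cexp (-I * ((x : ℂ) - I * ε) * s) / ((ζ : ℂ) ^ 2 - (((x : ℂ) - I * ε) / c) ^ 2)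
      = -c ^ 2 * cexp (-(ε * s)) * (cexp (↑(-s * x) * I) *
          (((x : ℂ) - (I * ε + c * ζ))⁻¹ * ((x : ℂ) - (I * ε - c * ζ))⁻¹)) := by
  have hexp : cexp (-I * ((x : ℂ) - I * ε) * s) = cexp (-(ε * s)) * cexp (↑(-s * x) * I) := by
    rw [← Complex.exp_add]
    push_cast
    congr 1
    linear_combination (ε * s : ℂ) * I_sq
  rw [div_eq_mul_inv, inv_sq_sub_div_sq (ofReal_ne_zero.2 hc), hexp]
  ring

/-- For `c, ζ, ε > 0` and `s < 0`, the contour integral of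
`e^{−izs}/D(z)`, `D(z) = ζ² − (z/c)²`, along the line `Im z = −ε` (which lies below the
poles `z = ±cζ`) converges and equals `(cπi/ζ)(e^{iscζ} − e^{−iscζ})`. -/
theorem contour_integral_advanced_green_kernel
    (c ζ ε s : ℝ) (hc : 0 < c) (hζ : 0 < ζ) (hε : 0 < ε) (hs : s < 0) :
    Integrable (fun x : ℝ =>
        Complex.exp (-Complex.I * ((x : ℂ) - Complex.I * (ε : ℂ)) * (s : ℂ)) /
          ((ζ : ℂ) ^ 2 - (((x : ℂ) - Complex.I * (ε : ℂ)) / (c : ℂ)) ^ 2)) ∧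
      ∫ x : ℝ,
          Complex.exp (-Complex.I * ((x : ℂ) - Complex.I * (ε : ℂ)) * (s : ℂ)) /
            ((ζ : ℂ) ^ 2 - (((x : ℂ) - Complex.I * (ε : ℂ)) / (c : ℂ)) ^ 2)
        = ((c : ℂ) * (Real.pi : ℂ) * Complex.I / (ζ : ℂ)) *
            (Complex.exp (Complex.I * (s : ℂ) * (c : ℂ) * (ζ : ℂ))
              - Complex.exp (-(Complex.I * (s : ℂ) * (c : ℂ) * (ζ : ℂ)))) := by
  have h₁ : 0 < (I * ε + c * ζ : ℂ).im := by simpa using hε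
  have h₂ : 0 < (I * ε - c * ζ : ℂ).im := by simpa using hε
  have hne : (I * ε + c * ζ : ℂ) ≠ I * ε - c * ζ := fun h ↦ by
    have hre : c * ζ = -(c * ζ) := by simpa using congrArg re h
    linarith [mul_pos hc hζ]
  simp only [exp_div_sq_sub_div_sq_eq hc.ne']
  refine ⟨((integrable_inv_ofReal_sub_mul_inv_ofReal_sub h₁.ne' h₂.ne').exp_ofReal_mul_I_mul
    (by fun_prop)).const_mul _, ?_⟩
  rw [integral_const_mul, integral_exp_mul_inv_ofReal_sub_mul_inv_ofReal_sub h₁ h₂ hne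
    (neg_pos.2 hs), ofReal_neg]
  calc _ = -c ^ 2 * (2 * π * I / (2 * c * ζ)) *
        (cexp (-(ε * s)) * cexp (I * -s * (I * ε + c * ζ))
          - cexp (-(ε * s)) * cexp (I * -s * (I * ε - c * ζ))) := by ring
    _ = _ := by
      have hζ' : (ζ : ℂ) ≠ 0 := ofReal_ne_zero.2 hζ.ne'
      rw [sub_eq_add_neg (I * (ε : ℂ)), exp_neg_mul_mul_exp_I_mul_add,
        exp_neg_mul_mul_exp_I_mul_add]
      field_simp
      ring
end

section
/- Let α > 0 and ε > 0. Then the vector-valued double integral ∫₀^{2π} ∫₀^{ε} ρ · (ρ cos θ, ρ sin θ, εα) / (ρ² + (εα)²)^{3/2} dρ dθ equals (0, 0, 2π(1 − α/√(1+α²))). In particular its value is independent of ε, it is a multiple of the unit normal direction (0,0,1), and hence the ε → 0 limit of this integral exists and equals χ·(0,0,1) with χ = 2π(1 − α/√(1+α²)). -/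
/-!
The integrand splits as `(ρ² f(ρ)) (cos θ, sin θ, 0) + εα ρ f(ρ) (0, 0, 1)` with
`f(ρ) = (ρ² + (εα)²)^(-3/2)`; the tangential part integrates to zero over a full turn, and
`-(ρ² + c²)^(-1/2)` is an antiderivative of `ρ f(ρ)`, so the normal part is
`2π εα ((εα)⁻¹ - (ε√(1+α²))⁻¹) = 2π (1 - α/√(1+α²))`, independent of `ε`.
-/

open intervalIntegral Filter

theorem intervalIntegral.eval_integral {ι : Type*} [Fintype ι] {E : ι → Type*}
    [∀ i, NormedAddCommGroup (E i)] [∀ i, NormedSpace ℝ (E i)] [∀ i, CompleteSpace (E i)]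
    {f : ℝ → Π i, E i} {a b : ℝ} {μ : MeasureTheory.Measure ℝ}
    (hf : IntervalIntegrable f μ a b) (i : ι) :
    (∫ x in a..b, f x ∂μ) i = ∫ x in a..b, f x i ∂μ :=
  ((ContinuousLinearMap.proj (R := ℝ) (φ := E) i).intervalIntegral_comp_comm hf).symm

theorem continuous_div_rpow_three_halves {c : ℝ} (hc : c ≠ 0) :
    Continuous (fun r : ℝ => r / (r ^ 2 + c ^ 2) ^ ((3:ℝ)/2)) := by
  have hpos : ∀ r : ℝ, 0 < r ^ 2 + c ^ 2 := fun r => by positivity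
  exact continuous_id.div (by fun_prop (disch := norm_num))
    fun r => (Real.rpow_pos_of_pos (hpos r) _).ne'

theorem hasDerivAt_neg_inv_sqrt_sq_add_sq {c : ℝ} (hc : c ≠ 0) (r : ℝ) :
    HasDerivAt (fun r : ℝ => -(√(r ^ 2 + c ^ 2))⁻¹) (r / (r ^ 2 + c ^ 2) ^ ((3:ℝ)/2)) r := by
  have hpos : 0 < r ^ 2 + c ^ 2 := by positivity
  have h := (((hasDerivAt_pow 2 r).add_const (c ^ 2)).sqrt hpos.ne').inv
    (Real.sqrt_pos.mpr hpos).ne' |>.neg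
  refine h.congr_deriv ?_
  have h32 : (r ^ 2 + c ^ 2) ^ ((3:ℝ)/2) = (r ^ 2 + c ^ 2) * √(r ^ 2 + c ^ 2) := by
    rw [Real.sqrt_eq_rpow, ← Real.rpow_one_add' hpos.le (by norm_num)]; norm_num
  rw [h32, Real.sq_sqrt hpos.le]
  field_simp
  ring

theorem integral_div_rpow_three_halves {c : ℝ} (hc : c ≠ 0) (a : ℝ) :
    ∫ r in (0:ℝ)..a, r / (r ^ 2 + c ^ 2) ^ ((3:ℝ)/2) = |c|⁻¹ - (√(a ^ 2 + c ^ 2))⁻¹ := by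
  rw [integral_eq_sub_of_hasDerivAt (fun r _ => hasDerivAt_neg_inv_sqrt_sq_add_sq hc r)
    ((continuous_div_rpow_three_halves hc).intervalIntegrable _ _)]
  simp [Real.sqrt_sq_eq_abs]
  ring

theorem mul_integral_div_rpow_three_halves {α ε : ℝ} (hα : 0 < α) (hε : 0 < ε) :
    ε * α * ∫ r in (0:ℝ)..ε, r / (r ^ 2 + (ε * α) ^ 2) ^ ((3:ℝ)/2)
      = 1 - α / √(1 + α ^ 2) := by
  have hsqrt : √(ε ^ 2 + (ε * α) ^ 2) = ε * √(1 + α ^ 2) := by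
    rw [show ε ^ 2 + (ε * α) ^ 2 = ε ^ 2 * (1 + α ^ 2) by ring,
      Real.sqrt_mul (by positivity), Real.sqrt_sq hε.le]
  rw [integral_div_rpow_three_halves (mul_pos hε hα).ne', hsqrt, abs_of_pos (mul_pos hε hα)]
  have : 0 < √(1 + α ^ 2) := by positivity
  field_simp

theorem integral_smul_polar_vector {f : ℝ → ℝ} (hf : Continuous f) (a c θ : ℝ) :
    ∫ r in (0:ℝ)..a, f r • (![r * Real.cos θ, r * Real.sin θ, c] : Fin 3 → ℝ)
      = ![(∫ r in (0:ℝ)..a, f r * r) * Real.cos θ, (∫ r in (0:ℝ)..a, f r * r) * Real.sin θ,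
          c * ∫ r in (0:ℝ)..a, f r] := by
  funext i
  rw [eval_integral ((by fun_prop : Continuous _).intervalIntegrable _ _)]
  fin_cases i <;> simp [← integral_mul_const, mul_assoc, mul_comm c]

theorem integral_polar_vector_full_turn (A B : ℝ) :
    ∫ θ in (0:ℝ)..(2 * Real.pi), (![A * Real.cos θ, A * Real.sin θ, B] : Fin 3 → ℝ)
      = ![0, 0, 2 * Real.pi * B] := by
  funext i
  rw [eval_integral ((by fun_prop : Continuous _).intervalIntegrable _ _)]
  fin_cases i <;> simp

/-- The polar-coordinate evaluation of the singular surface integral: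
for `α, ε > 0`,
`∫₀^{2π} ∫₀^{ε} ρ (ρcosθ, ρsinθ, εα)/(ρ² + (εα)²)^{3/2} dρ dθ
  = (0, 0, 2π(1 − α/√(1+α²)))`.
In particular the value is independent of `ε`, is a multiple of the unit normal
direction `(0,0,1)`, and the `ε → 0⁺` limit exists and equals `χ • (0,0,1)` with
`χ = 2π(1 − α/√(1+α²))`. -/
theorem singular_surface_integral_polar
    (α : ℝ) (hα : 0 < α) :
    (∀ ε : ℝ, 0 < ε →
      (∫ θ in (0:ℝ)..(2 * Real.pi), ∫ r in (0:ℝ)..ε,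
          (r / (r ^ 2 + (ε * α) ^ 2) ^ ((3:ℝ)/2)) •
            (![r * Real.cos θ, r * Real.sin θ, ε * α] : Fin 3 → ℝ))
        = ![0, 0, 2 * Real.pi * (1 - α / Real.sqrt (1 + α ^ 2))]) ∧
    Tendsto (fun ε : ℝ =>
        ∫ θ in (0:ℝ)..(2 * Real.pi), ∫ r in (0:ℝ)..ε,
          (r / (r ^ 2 + (ε * α) ^ 2) ^ ((3:ℝ)/2)) •
            (![r * Real.cos θ, r * Real.sin θ, ε * α] : Fin 3 → ℝ))
      (nhdsWithin 0 (Set.Ioi 0))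
      (nhds ((2 * Real.pi * (1 - α / Real.sqrt (1 + α ^ 2))) • (![0, 0, 1] : Fin 3 → ℝ))) := by
  have heval : ∀ ε : ℝ, 0 < ε →
      (∫ θ in (0:ℝ)..(2 * Real.pi), ∫ r in (0:ℝ)..ε,
          (r / (r ^ 2 + (ε * α) ^ 2) ^ ((3:ℝ)/2)) •
            (![r * Real.cos θ, r * Real.sin θ, ε * α] : Fin 3 → ℝ))
        = ![0, 0, 2 * Real.pi * (1 - α / Real.sqrt (1 + α ^ 2))] := fun ε hε => by
    simp_rw [integral_smul_polar_vector (continuous_div_rpow_three_halves (mul_pos hε hα).ne'),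
      integral_polar_vector_full_turn, mul_integral_div_rpow_three_halves hα hε]
  refine ⟨heval, ?_⟩
  have hlim : (2 * Real.pi * (1 - α / Real.sqrt (1 + α ^ 2))) • (![0, 0, 1] : Fin 3 → ℝ)
      = ![0, 0, 2 * Real.pi * (1 - α / Real.sqrt (1 + α ^ 2))] := by
    simp
  rw [hlim]
  exact tendsto_const_nhds.congr' (eventually_nhdsWithin_of_forall fun ε hε => (heval ε hε).symm)
end
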